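/- Special case of Bailey's lemma: let a \in \{0,1\} and let \((\alpha_j)_{j\in\mathbb{Z}}\) be any family of rational functions of q. Define \(F_a(L,q) = \sum_{j=-\infty}^{\infty} \alpha_j(q) \binom{2L+a}{L-j}_q\) (a finite sum since the q-binomial coefficient vanishes for |j|>L+a). Then for every non-negative integer L, \(\sum_{r= 0}^{L} \frac{q^{r^2+ar}(q;q)_{2L+a}}{(q;q)_{L-r}\,(q;q)_{2r+a}} F_a(r,q) = \sum_{j=-\infty}^{\infty} \alpha_j(q)\, q^{j^2+aj} \binom{2L+a}{L-j}_q\). -/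

import Mathlib

open Finset

/-- The finite q-Pochhammer symbol `(a;q)_n`. -/
noncomputable def qPoch (a q : RatFunc ℚ) (n : ℕ) : RatFunc ℚ :=
  ∏ k ∈ Finset.range n, (1 - a * q ^ k)

/-- The q-binomial coefficient `[top choose bot]_q`, zero unless `0 ≤ bot ≤ top`. -/
noncomputable def qBinom (q : RatFunc ℚ) (top bot : ℤ) : RatFunc ℚ :=
  if 0 ≤ bot ∧ bot ≤ top then
    qPoch q q top.toNat / (qPoch q q bot.toNat * qPoch q q (top - bot).toNat)
  else 0

/-- The Legendre symbol modulo 3. -/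
def leg3 (j : ℤ) : ℤ := if j % 3 = 1 then 1 else if j % 3 = 2 then -1 else 0

/-- `1/(q;q)_k`, with the convention that it is zero for negative `k`. -/
noncomputable def invPoch (q : RatFunc ℚ) (k : ℤ) : RatFunc ℚ :=
  if 0 ≤ k then (qPoch q q k.toNat)⁻¹ else 0

/-- The generic variable `q` in the field of rational functions. -/
noncomputable def Xq : RatFunc ℚ := RatFunc.X

/-! By linearity in `α` it suffices to treat a single `α_j`. The symmetry `[n, k] = [n, n - k]`
exchanges `j` and `-j - a` and preserves `j² + aj`, so one may take `0 ≤ j ≤ L`. Substituting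
`r = j + s`, `n = L - j`, `m = 2j + a`, the identity for `α_j` becomes the q-Chu–Vandermonde sum
`∑_s q^(s(s+m)) [n, s] (q^(s+m+1); q)_(n-s) = 1`, proved for all `m` at once by induction on `n`:
after the q-Pascal rule, the terms of the sum for `(n + 1, m)` pair up into those for `(n, m + 1)`.
-/

lemma Xq_pow_succ_ne_one (k : ℕ) : Xq ^ (k + 1) ≠ 1 := by
  rw [Xq, ← RatFunc.algebraMap_X, ← map_pow, ← map_one (algebraMap (Polynomial ℚ) (RatFunc ℚ)),
    Ne, (RatFunc.algebraMap_injective ℚ).eq_iff]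
  intro h
  simpa using congrArg Polynomial.natDegree h

lemma qPoch_zero (a q : RatFunc ℚ) : qPoch a q 0 = 1 := prod_range_zero _

lemma qPoch_succ' (a q : RatFunc ℚ) (n : ℕ) :
    qPoch a q (n + 1) = (1 - a) * qPoch (a * q) q n := by
  rw [qPoch, qPoch, prod_range_succ', mul_comm]
  simp [pow_succ', mul_assoc]

section

variable {q : RatFunc ℚ}

lemma qPoch_self_succ (n : ℕ) : qPoch q q (n + 1) = qPoch q q n * (1 - q ^ (n + 1)) := by
  rw [qPoch, qPoch, prod_range_succ, ← pow_succ']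

lemma qPoch_self_add (s t : ℕ) : qPoch q q (s + t) = qPoch q q s * qPoch (q ^ (s + 1)) q t := by
  rw [qPoch, qPoch, qPoch, prod_range_add]
  congr 1
  exact prod_congr rfl fun k _ => by ring

lemma qPoch_self_ne_zero (hq : ∀ k : ℕ, q ^ (k + 1) ≠ 1) (n : ℕ) : qPoch q q n ≠ 0 :=
  prod_ne_zero_iff.mpr fun k _ => by rw [← pow_succ']; exact sub_ne_zero.mpr (hq k).symm

lemma qPoch_pow_succ_eq_div (hq : ∀ k : ℕ, q ^ (k + 1) ≠ 1) (s t : ℕ) :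
    qPoch (q ^ (s + 1)) q t = qPoch q q (s + t) / qPoch q q s := by
  rw [qPoch_self_add, mul_div_cancel_left₀ _ (qPoch_self_ne_zero hq s)]

lemma qBinom_eq_zero {top bot : ℤ} (h : bot < 0 ∨ top < bot) : qBinom q top bot = 0 := by
  rw [qBinom, if_neg]
  omega

lemma qBinom_symm (top bot : ℤ) : qBinom q top bot = qBinom q top (top - bot) := by
  unfold qBinom
  by_cases h : 0 ≤ bot ∧ bot ≤ top
  · rw [if_pos h, if_pos (by omega), sub_sub_cancel, mul_comm]
  · rw [if_neg h, if_neg (by omega)]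

lemma qBinom_eq_div {top : ℤ} (s u : ℕ) (h : top = s + u) :
    qBinom q top s = qPoch q q (s + u) / (qPoch q q s * qPoch q q u) := by
  subst h
  rw [qBinom, if_pos (by omega), show ((s : ℤ) + u).toNat = s + u by omega]
  simp

lemma qBinom_zero_right (hq : ∀ k : ℕ, q ^ (k + 1) ≠ 1) (n : ℕ) : qBinom q n 0 = 1 := by
  rw [← Nat.cast_zero, qBinom_eq_div 0 n (by simp), zero_add, qPoch_zero, one_mul,
    div_self (qPoch_self_ne_zero hq n)]

lemma qBinom_self (hq : ∀ k : ℕ, q ^ (k + 1) ≠ 1) (n : ℕ) : qBinom q n n = 1 := by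
  rw [qBinom_eq_div n 0 (by simp), add_zero, qPoch_zero, mul_one,
    div_self (qPoch_self_ne_zero hq n)]

lemma qBinom_succ (hq : ∀ k : ℕ, q ^ (k + 1) ≠ 1) (n s : ℕ) :
    qBinom q (n + 1) s = q ^ s * qBinom q n s + qBinom q n (s - 1) := by
  rcases s with _ | t
  · rw [← Nat.cast_succ, Nat.cast_zero, qBinom_zero_right hq, qBinom_zero_right hq,
      qBinom_eq_zero (Or.inl (by norm_num))]
    ring
  rcases lt_trichotomy t n with h | rfl | h
  · obtain ⟨u, rfl⟩ := Nat.exists_eq_add_of_lt h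
    rw [qBinom_eq_div (t + 1) (u + 1) (by push_cast; ring),
      qBinom_eq_div (t + 1) u (by push_cast; ring),
      show ((t + 1 : ℕ) : ℤ) - 1 = t by push_cast; ring,
      qBinom_eq_div t (u + 1) (by push_cast; ring),
      show t + 1 + (u + 1) = t + u + 1 + 1 by ring, show t + 1 + u = t + u + 1 by ring,
      show t + (u + 1) = t + u + 1 by ring, qPoch_self_succ (t + u + 1), qPoch_self_succ t,
      qPoch_self_succ u]
    have := qPoch_self_ne_zero hq t
    have := qPoch_self_ne_zero hq u
    have := sub_ne_zero.mpr (hq t).symm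
    have := sub_ne_zero.mpr (hq u).symm
    field_simp
    ring
  · rw [← Nat.cast_succ, qBinom_self hq, qBinom_eq_zero (Or.inr (by omega)),
      show ((t + 1 : ℕ) : ℤ) - 1 = t by push_cast; ring, qBinom_self hq]
    ring
  · rw [qBinom_eq_zero (Or.inr (by omega)), qBinom_eq_zero (Or.inr (by omega)),
      qBinom_eq_zero (Or.inr (by omega))]
    ring

lemma sum_qBinom_mul_qPoch_eq_one (hq : ∀ k : ℕ, q ^ (k + 1) ≠ 1) (n m : ℕ) :
    ∑ s ∈ range (n + 1), q ^ (s * (s + m)) * qBinom q n s * qPoch (q ^ (s + m + 1)) q (n - s) =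
      1 := by
  induction n generalizing m with
  | zero => simpa [qPoch_zero] using qBinom_self hq 0
  | succ n ih =>
    have pair : ∀ s ∈ range (n + 1),
        q ^ (s * (s + m)) * q ^ s * qBinom q n s * qPoch (q ^ (s + m + 1)) q (n + 1 - s) +
          q ^ ((s + 1) * (s + 1 + m)) * qBinom q n s * qPoch (q ^ (s + 1 + m + 1)) q (n - s) =
        q ^ (s * (s + (m + 1))) * qBinom q n s * qPoch (q ^ (s + (m + 1) + 1)) q (n - s) := by
      intro s hs
      rw [mem_range] at hs
      rw [show n + 1 - s = n - s + 1 by omega, qPoch_succ', ← pow_succ,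
        show s + 1 + m + 1 = s + m + 1 + 1 by ring, show s + (m + 1) + 1 = s + m + 1 + 1 by ring]
      ring
    calc ∑ s ∈ range (n + 1 + 1),
          q ^ (s * (s + m)) * qBinom q ↑(n + 1) s * qPoch (q ^ (s + m + 1)) q (n + 1 - s)
        = ∑ s ∈ range (n + 1 + 1),
            (q ^ (s * (s + m)) * q ^ s * qBinom q n s * qPoch (q ^ (s + m + 1)) q (n + 1 - s) +
              q ^ (s * (s + m)) * qBinom q n (s - 1) * qPoch (q ^ (s + m + 1)) q (n + 1 - s)) :=
          sum_congr rfl fun s _ => by rw [Nat.cast_succ, qBinom_succ hq]; ring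
      _ = ∑ s ∈ range (n + 1),
            (q ^ (s * (s + m)) * q ^ s * qBinom q n s * qPoch (q ^ (s + m + 1)) q (n + 1 - s) +
              q ^ ((s + 1) * (s + 1 + m)) * qBinom q n s *
                qPoch (q ^ (s + 1 + m + 1)) q (n - s)) := by
          rw [sum_add_distrib, sum_add_distrib, sum_range_succ _ (n + 1), sum_range_succ' _ (n + 1),
            qBinom_eq_zero (Or.inr (by omega)), qBinom_eq_zero (Or.inl (by omega))]
          simp
      _ = 1 := (sum_congr rfl pair).trans (ih (m + 1))

noncomputable def baileyCoeff (q : RatFunc ℚ) (a L r : ℕ) : RatFunc ℚ :=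
  q ^ (r ^ 2 + a * r) * qPoch q q (2 * L + a) * (qPoch q q (L - r) * qPoch q q (2 * r + a))⁻¹

lemma baileyCoeff_mul_qBinom (hq : ∀ k : ℕ, q ^ (k + 1) ≠ 1) (a j : ℕ) {n s : ℕ}
    (hs : s ≤ n) :
    baileyCoeff q a (j + n) (j + s) * qBinom q (2 * ↑(j + s) + a) (↑(j + s) - j) =
      q ^ (j ^ 2 + a * j) * qBinom q (2 * ↑(j + n) + a) n *
        (q ^ (s * (s + (2 * j + a))) * qBinom q n s *
          qPoch (q ^ (s + (2 * j + a) + 1)) q (n - s)) := by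
  obtain ⟨u, rfl⟩ := Nat.exists_eq_add_of_le hs
  rw [baileyCoeff, show ((j + s : ℕ) : ℤ) - j = s by push_cast; ring,
    qBinom_eq_div s (s + (2 * j + a)) (by push_cast; ring),
    qBinom_eq_div (s + u) (s + u + (2 * j + a)) (by push_cast; ring),
    qBinom_eq_div s u (by push_cast; ring), qPoch_pow_succ_eq_div hq, Nat.add_sub_cancel_left,
    show j + (s + u) - (j + s) = u by omega,
    show 2 * (j + (s + u)) + a = s + u + (s + u + (2 * j + a)) by ring,
    show 2 * (j + s) + a = s + (s + (2 * j + a)) by ring,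
    show s + (2 * j + a) + u = s + u + (2 * j + a) by ring,
    show (j + s) ^ 2 + a * (j + s) = j ^ 2 + a * j + s * (s + (2 * j + a)) by ring, pow_add]
  have := qPoch_self_ne_zero hq s
  have := qPoch_self_ne_zero hq u
  have := qPoch_self_ne_zero hq (s + u)
  have := qPoch_self_ne_zero hq (s + (2 * j + a))
  have := qPoch_self_ne_zero hq (s + (s + (2 * j + a)))
  have := qPoch_self_ne_zero hq (s + u + (2 * j + a))
  field_simp

lemma sum_baileyCoeff_mul_qBinom_natCast (hq : ∀ k : ℕ, q ^ (k + 1) ≠ 1)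
    (a : ℕ) {j L : ℕ} (hjL : j ≤ L) :
    ∑ r ∈ range (L + 1), baileyCoeff q a L r * qBinom q (2 * r + a) (r - j) =
      q ^ (j ^ 2 + a * j) * qBinom q (2 * L + a) (L - j) := by
  obtain ⟨n, rfl⟩ := Nat.exists_eq_add_of_le hjL
  have below_j : ∑ r ∈ range j, baileyCoeff q a (j + n) r * qBinom q (2 * r + a) (r - j) = 0 :=
    sum_eq_zero fun r hr => by
      rw [qBinom_eq_zero (Or.inl (by simp only [mem_range] at hr; omega)), mul_zero]
  rw [add_assoc, sum_range_add, below_j, zero_add,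
    sum_congr rfl fun s hs => baileyCoeff_mul_qBinom hq a j (Nat.lt_succ_iff.mp (mem_range.mp hs)),
    ← mul_sum, sum_qBinom_mul_qPoch_eq_one hq, mul_one,
    show ((j + n : ℕ) : ℤ) - j = n by push_cast; ring]

lemma sum_baileyCoeff_mul_qBinom (hq : ∀ k : ℕ, q ^ (k + 1) ≠ 1)
    {a : ℕ} (ha : a ≤ 1) {L : ℕ} {j : ℤ} (hj : j ∈ Icc (-(L : ℤ) - a) L) :
    ∑ r ∈ range (L + 1), baileyCoeff q a L r * qBinom q (2 * r + a) (r - j) =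
      q ^ (j ^ 2 + a * j) * qBinom q (2 * L + a) (L - j) := by
  rw [mem_Icc] at hj
  rcases le_or_gt 0 j with hj0 | hj0
  · lift j to ℕ using hj0
    rw [sum_baileyCoeff_mul_qBinom_natCast hq a (by omega), ← zpow_natCast]
    push_cast
    rfl
  · obtain ⟨i, hi⟩ : ∃ i : ℕ, (i : ℤ) = -j - a := ⟨(-j - a).toNat, by omega⟩
    calc ∑ r ∈ range (L + 1), baileyCoeff q a L r * qBinom q (2 * r + a) (r - j)
        = ∑ r ∈ range (L + 1), baileyCoeff q a L r * qBinom q (2 * r + a) (r - i) :=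
          sum_congr rfl fun r _ => by rw [qBinom_symm]; congr 2; omega
      _ = q ^ (j ^ 2 + a * j) * qBinom q (2 * L + a) (L - j) := by
          rw [sum_baileyCoeff_mul_qBinom_natCast hq a (by omega), qBinom_symm (2 * L + a : ℤ),
            ← zpow_natCast, show (2 * L + a : ℤ) - (L - i) = L - j by omega]
          congr 2
          push_cast
          rw [hi]
          ring

end

/-- Special case of Bailey's lemma: for `a ∈ {0,1}` and any family `α_j` of rational
functions of `q`, with `F_a(L,q) = ∑_j α_j(q) [2L+a choose L-j]_q` (a finite sum, here
taken over `-(L+a) ≤ j ≤ L`, which covers all nonzero terms), one has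
`∑_{r=0}^{L} q^{r²+ar} (q;q)_{2L+a} / ((q;q)_{L-r} (q;q)_{2r+a}) · F_a(r,q)
  = ∑_j α_j(q) q^{j²+aj} [2L+a choose L-j]_q`. -/
theorem statement4 (α : ℤ → RatFunc ℚ) (a : ℕ) (ha : a ≤ 1) (L : ℕ) :
    ∑ r ∈ Finset.range (L + 1),
      Xq ^ (r ^ 2 + a * r) * qPoch Xq Xq (2 * L + a) *
        (qPoch Xq Xq (L - r) * qPoch Xq Xq (2 * r + a))⁻¹ *
        (∑ j ∈ Finset.Icc (-(r : ℤ) - a) (r : ℤ),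
          α j * qBinom Xq (2 * r + a) ((r : ℤ) - j)) =
    ∑ j ∈ Finset.Icc (-(L : ℤ) - a) (L : ℤ),
      α j * Xq ^ (j ^ 2 + a * j) * qBinom Xq (2 * L + a) ((L : ℤ) - j) := by
  have extend : ∀ r ∈ range (L + 1),
      ∑ j ∈ Icc (-(r : ℤ) - a) r, α j * qBinom Xq (2 * r + a) (r - j) =
        ∑ j ∈ Icc (-(L : ℤ) - a) L, α j * qBinom Xq (2 * r + a) (r - j) := by
    intro r hr
    rw [mem_range] at hr
    refine sum_subset (Icc_subset_Icc (by omega) (by omega)) fun j _ hj => ?_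
    rw [mem_Icc] at hj
    rw [qBinom_eq_zero (by omega), mul_zero]
  calc _ = ∑ r ∈ range (L + 1), ∑ j ∈ Icc (-(L : ℤ) - a) L,
          α j * (baileyCoeff Xq a L r * qBinom Xq (2 * r + a) (r - j)) :=
        sum_congr rfl fun r hr => by
          rw [extend r hr, baileyCoeff, mul_sum]
          exact sum_congr rfl fun j _ => by ring
    _ = ∑ j ∈ Icc (-(L : ℤ) - a) L,
          α j * ∑ r ∈ range (L + 1), baileyCoeff Xq a L r * qBinom Xq (2 * r + a) (r - j) := by
        rw [sum_comm]
        simp only [mul_sum]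
    _ = _ := sum_congr rfl fun j hj => by
        rw [sum_baileyCoeff_mul_qBinom Xq_pow_succ_ne_one ha hj, mul_assoc]
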